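/- arXiv:2309.11651 — 2 statements merged into one kernel-verified Lean document; each statement's English description precedes it below -/
import Mathlib

section
/- Let a, b, c, h > 0 and define z* = (1/h)√(a(ch + a h²/(4b²))) − a/(2b) and ξ* = √(a(ch + a h²/(4b²))). Define f : [0,∞) → ℝ piecewise by f(z) = (2/√a)√(ch + a h²/(4b²)) z − (h/a) z² for z < z*, and f(z) = (h/b) z + ha/(2b²) − (√a/b)√(ch + a h²/(4b²)) + c for z ≥ z*. Then f(0) = 0, f is continuously differentiable at z*, and f satisfies the first-order ODE (a/2) f′(z) + h z − b (f(z) − c)⁺ = ξ* for all z ≥ 0. -/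
/-!
Write `d = a h / (2 b)`. The quadratic `(2 ξ z - h z²) / a` solves `(a/2) f' + h z = ξ`, and
the line `c + (h / b) (z - z₀)` solves `(a/2) f' + h z - b (f - c) = ξ` as soon as
`h z₀ = ξ - d`. The identity `ξ² = a c h + d²` makes the quadratic reach the value `c` with
slope `h / b` at `z₀`, so the two pieces paste to a `C¹` function. As `z₀` lies left of the
vertex `ξ / h`, the quadratic stays below `c` before `z₀` and the line stays above `c` after
it, which selects the right branch of `(f - c)⁺` on each side.
-/

open Set Filter Topology

theorem hasDerivAt_ite_lt {F : Type*} [NormedAddCommGroup F] [NormedSpace ℝ F]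
    {g k g' k' : ℝ → F} {z₀ : ℝ}
    (hg : ∀ x, HasDerivAt g (g' x) x) (hk : ∀ x, HasDerivAt k (k' x) x)
    (hval : g z₀ = k z₀) (hder : g' z₀ = k' z₀) (x : ℝ) :
    HasDerivAt (fun z => if z < z₀ then g z else k z) (if x < z₀ then g' x else k' x) x := by
  rcases lt_trichotomy x z₀ with hx | rfl | hx
  · rw [if_pos hx]
    exact (hg x).congr_of_eventuallyEq <| eventually_of_mem (Iio_mem_nhds hx) fun z hz => if_pos hz
  · rw [if_neg (lt_irrefl x)]
    have hleft : HasDerivWithinAt (fun z => if z < x then g z else k z) (k' x) (Iio x) x :=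
      hder ▸ (hg x).hasDerivWithinAt.congr (fun z hz => if_pos hz) (by simp [hval])
    have hright : HasDerivWithinAt (fun z => if z < x then g z else k z) (k' x) (Ici x) x :=
      (hk x).hasDerivWithinAt.congr (fun z hz => if_neg (not_lt.2 hz)) (if_neg (lt_irrefl x))
    have h := (hasDerivWithinAt_Iio_iff_Iic.1 hleft).union hright
    rwa [Iic_union_Ici, hasDerivWithinAt_univ] at h
  · rw [if_neg hx.not_gt]
    exact (hk x).congr_of_eventuallyEq <|
      eventually_of_mem (Ioi_mem_nhds hx) fun z hz => if_neg (not_lt.2 hz.le)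

theorem quadratic_le_of_le_vertex {a h ξ z z₀ : ℝ} (ha : 0 < a) (hh : 0 ≤ h) (hz₀ : h * z₀ ≤ ξ)
    (hz : z ≤ z₀) : (2 * ξ * z - h * z ^ 2) / a ≤ (2 * ξ * z₀ - h * z₀ ^ 2) / a := by
  refine div_le_div_of_nonneg_right ?_ ha.le
  nlinarith [mul_nonneg (sub_nonneg.2 hz) (sub_nonneg.2 hz₀), mul_nonneg hh (sq_nonneg (z₀ - z))]

section ClosedForm

noncomputable def hjbSolution (a b c h ξ z₀ z : ℝ) : ℝ :=
  if z < z₀ then (2 * ξ * z - h * z ^ 2) / a else c + h / b * (z - z₀)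

variable {a b c h ξ z₀ : ℝ}

theorem quadratic_at_switchPoint (ha : a ≠ 0) (hh : h ≠ 0)
    (hξ : ξ ^ 2 = a * c * h + (a * h / (2 * b)) ^ 2) (hz₀ : h * z₀ = ξ - a * h / (2 * b)) :
    (2 * ξ * z₀ - h * z₀ ^ 2) / a = c := by
  rw [div_eq_iff ha]
  refine mul_right_cancel₀ hh ?_
  linear_combination hξ + (a * h / (2 * b) + ξ - h * z₀) * hz₀

theorem quadratic_deriv_at_switchPoint (ha : a ≠ 0) (hb : b ≠ 0)
    (hz₀ : h * z₀ = ξ - a * h / (2 * b)) : 2 * (ξ - h * z₀) / a = h / b := by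
  rw [hz₀]
  field_simp
  ring

theorem hasDerivAt_hjbSolution (ha : a ≠ 0) (hb : b ≠ 0) (hh : h ≠ 0)
    (hξ : ξ ^ 2 = a * c * h + (a * h / (2 * b)) ^ 2) (hz₀ : h * z₀ = ξ - a * h / (2 * b))
    (x : ℝ) :
    HasDerivAt (hjbSolution a b c h ξ z₀) (if x < z₀ then 2 * (ξ - h * x) / a else h / b) x := by
  have hquad (y : ℝ) :
      HasDerivAt (fun z => (2 * ξ * z - h * z ^ 2) / a) (2 * (ξ - h * y) / a) y := by
    refine ((((hasDerivAt_id' y).const_mul (2 * ξ)).sub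
      ((hasDerivAt_pow 2 y).const_mul h)).div_const a).congr_deriv ?_
    norm_num
    ring
  have hlin (y : ℝ) : HasDerivAt (fun z => c + h / b * (z - z₀)) (h / b) y := by
    simpa using (((hasDerivAt_id' y).sub_const z₀).const_mul (h / b)).const_add c
  exact hasDerivAt_ite_lt hquad hlin (by simp [quadratic_at_switchPoint ha hh hξ hz₀])
    (quadratic_deriv_at_switchPoint ha hb hz₀) x

theorem continuous_deriv_hjbSolution (ha : a ≠ 0) (hb : b ≠ 0) (hh : h ≠ 0)
    (hξ : ξ ^ 2 = a * c * h + (a * h / (2 * b)) ^ 2) (hz₀ : h * z₀ = ξ - a * h / (2 * b)) :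
    Continuous (deriv (hjbSolution a b c h ξ z₀)) := by
  rw [funext fun x => (hasDerivAt_hjbSolution ha hb hh hξ hz₀ x).deriv]
  refine Continuous.if (fun x hx => ?_) (by fun_prop) continuous_const
  rw [show {x | x < z₀} = Iio z₀ from rfl, frontier_Iio, mem_singleton_iff] at hx
  rw [hx, quadratic_deriv_at_switchPoint ha hb hz₀]

theorem hjbSolution_hjb (ha : 0 < a) (hb : 0 < b) (hh : 0 < h)
    (hξ : ξ ^ 2 = a * c * h + (a * h / (2 * b)) ^ 2) (hz₀ : h * z₀ = ξ - a * h / (2 * b))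
    (z : ℝ) :
    a / 2 * deriv (hjbSolution a b c h ξ z₀) z + h * z
      - b * max (hjbSolution a b c h ξ z₀ z - c) 0 = ξ := by
  rw [(hasDerivAt_hjbSolution ha.ne' hb.ne' hh.ne' hξ hz₀ z).deriv, hjbSolution]
  split_ifs with hz
  · have hvertex : h * z₀ ≤ ξ := by
      rw [hz₀]
      linarith [show 0 ≤ a * h / (2 * b) by positivity]
    have hle : (2 * ξ * z - h * z ^ 2) / a - c ≤ 0 := by
      rw [sub_nonpos, ← quadratic_at_switchPoint ha.ne' hh.ne' hξ hz₀]
      exact quadratic_le_of_le_vertex ha hh.le hvertex hz.le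
    rw [max_eq_right hle]
    field_simp
    ring
  · have hge : 0 ≤ c + h / b * (z - z₀) - c := by
      rw [add_sub_cancel_left]
      exact mul_nonneg (by positivity) (sub_nonneg.2 (not_lt.1 hz))
    rw [max_eq_left hge]
    linear_combination hz₀ - (z - z₀) * mul_div_cancel₀ h hb.ne'

end ClosedForm

/-- Closed-form solution of the one-dimensional ergodic HJB equation with linear cost:
with `z* = (1/h)√(a(ch + ah²/(4b²))) − a/(2b)` and `ξ* = √(a(ch + ah²/(4b²)))`, the
piecewise function `f` defined below satisfies `f 0 = 0`, is continuously
differentiable at `z*`, and solves `(a/2) f′(z) + h z − b (f(z) − c)⁺ = ξ*` on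
`[0,∞)`. -/
theorem stmt_10 (a b c h : ℝ) (ha : 0 < a) (hb : 0 < b) (hc : 0 < c) (hh : 0 < h) :
    let zstar : ℝ := (1 / h) * Real.sqrt (a * (c * h + a * h ^ 2 / (4 * b ^ 2))) - a / (2 * b)
    let ξstar : ℝ := Real.sqrt (a * (c * h + a * h ^ 2 / (4 * b ^ 2)))
    let f : ℝ → ℝ := fun z =>
      if z < zstar then
        (2 / Real.sqrt a) * Real.sqrt (c * h + a * h ^ 2 / (4 * b ^ 2)) * z - (h / a) * z ^ 2
      else
        (h / b) * z + h * a / (2 * b ^ 2) -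
          (Real.sqrt a / b) * Real.sqrt (c * h + a * h ^ 2 / (4 * b ^ 2)) + c
    f 0 = 0 ∧ DifferentiableAt ℝ f zstar ∧ ContinuousAt (deriv f) zstar ∧
      ∀ z, 0 ≤ z → a / 2 * deriv f z + h * z - b * max (f z - c) 0 = ξstar := by
  intro zstar ξstar f
  have hξ_eq : ξstar = √a * √(c * h + a * h ^ 2 / (4 * b ^ 2)) := Real.sqrt_mul ha.le _
  have hξ : ξstar ^ 2 = a * c * h + (a * h / (2 * b)) ^ 2 := by
    rw [Real.sq_sqrt (by positivity)]
    ring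
  have hz₀ : h * zstar = ξstar - a * h / (2 * b) := by
    change h * (1 / h * ξstar - a / (2 * b)) = _
    rw [mul_sub, ← mul_assoc, mul_one_div_cancel hh.ne', one_mul]
    ring
  have hzstar : 0 < zstar := by
    have hd : a * h / (2 * b) < ξstar := lt_of_pow_lt_pow_left₀ 2 (Real.sqrt_nonneg _)
      (by rw [hξ]; linarith [mul_pos (mul_pos ha hc) hh])
    exact pos_of_mul_pos_right (by rw [hz₀]; linarith) hh.le
  have hf : f = hjbSolution a b c h ξstar zstar := by
    funext z
    simp only [f, hjbSolution]
    split_ifs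
    · rw [hξ_eq, show 2 / √a = 2 * (√a / a) by rw [Real.sqrt_div_self', mul_one_div]]
      ring
    · rw [hξ_eq] at hz₀
      linear_combination hz₀ / b
  rw [hf]
  exact ⟨by simp [hjbSolution, hzstar],
    (hasDerivAt_hjbSolution ha.ne' hb.ne' hh.ne' hξ hz₀ zstar).differentiableAt,
    (continuous_deriv_hjbSolution ha.ne' hb.ne' hh.ne' hξ hz₀).continuousAt,
    fun z _ => hjbSolution_hjb ha hb hh hξ hz₀ z⟩
end

section
/- Let r, h, a > 0 with h ≤ r c for some c > 0, and define V(z) = (h√a / (√2 r^{3/2})) e^{−√(2r/a) z} + h z / r for z ≥ 0. Then V′(0) = 0, V′(z) = (h/r)(1 − e^{−√(2r/a) z}) < c for all z ≥ 0, and V satisfies the ODE (a/2)V″(z) + h z − b (V′(z) − c)⁺ = r V(z) for every b ≥ 0 and z ≥ 0. -/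
/-!
`V` is a particular solution `hz/r` of `(a/2)V″ + hz = rV` plus a multiple of the decaying
exponential `e^{-αz}` with `(a/2)α² = r`, the multiple being chosen so that `V′(0) = 0`. Then
`V′(z) = (h/r)(1 − e^{-αz}) < h/r ≤ c`, so the control term `b(V′ − c)⁺` vanishes identically.
-/

open Real

noncomputable def expAffine (K α β : ℝ) (z : ℝ) : ℝ := K * exp (-α * z) + β * z

section expAffine

variable (K α β : ℝ)

theorem hasDerivAt_expAffine (z : ℝ) :
    HasDerivAt (expAffine K α β) (β - K * α * exp (-α * z)) z := by
  have hlin : HasDerivAt (fun z => -α * z) (-α) z := by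
    simpa using (hasDerivAt_id z).const_mul (-α)
  exact (((hlin.exp).const_mul K).add ((hasDerivAt_id' z).const_mul β)).congr_deriv (by ring)

theorem deriv_expAffine : deriv (expAffine K α β) = fun z => β - K * α * exp (-α * z) :=
  funext fun z => (hasDerivAt_expAffine K α β z).deriv

theorem deriv_deriv_expAffine (z : ℝ) :
    deriv (deriv (expAffine K α β)) z = K * α ^ 2 * exp (-α * z) := by
  rw [deriv_expAffine]
  convert ((hasDerivAt_expAffine (-(K * α)) α 0 z).const_add β).deriv using 1
  · simp [expAffine, sub_eq_add_neg]
  · ring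

theorem expAffine_solves_ode {a r h : ℝ} (hα : a / 2 * α ^ 2 = r) (hβ : r * β = h) (z : ℝ) :
    a / 2 * deriv (deriv (expAffine K α β)) z + h * z = r * expAffine K α β z := by
  rw [deriv_deriv_expAffine, expAffine, ← hα, ← hβ, ← hα]
  ring

end expAffine

theorem mul_one_sub_exp_lt {p c : ℝ} (hp : 0 < p) (hpc : p ≤ c) (x : ℝ) :
    p * (1 - exp x) < c := by
  nlinarith [exp_pos x]

theorem stmt_12_general (r h a c : ℝ) (hr : 0 < r) (hh : 0 < h) (ha : 0 < a)
    (hhc : h ≤ r * c) :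
    let V : ℝ → ℝ := fun z =>
      (h * Real.sqrt a / (Real.sqrt 2 * (r * Real.sqrt r))) *
          Real.exp (-(Real.sqrt (2 * r / a)) * z) + h * z / r
    deriv V 0 = 0 ∧
      (∀ z, 0 ≤ z →
        deriv V z = (h / r) * (1 - Real.exp (-(Real.sqrt (2 * r / a)) * z)) ∧
          deriv V z < c) ∧
      (∀ b z, 0 ≤ b → 0 ≤ z →
        a / 2 * deriv (deriv V) z + h * z - b * max (deriv V z - c) 0 = r * V z) := by
  intro V
  set α := √(2 * r / a) with hα_def
  set K := h * √a / (√2 * (r * √r))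
  have hV : V = expAffine K α (h / r) := funext fun z => by simp only [V, expAffine]; ring
  have hα : α = √2 * √r / √a := by rw [hα_def, sqrt_div' _ ha.le, sqrt_mul zero_le_two]
  have hKα : K * α = h / r := by
    rw [hα]
    simp only [K]
    field_simp
  have hα_sq : a / 2 * α ^ 2 = r := by
    rw [hα_def, sq_sqrt (by positivity)]
    field_simp
  have hV' : ∀ z, deriv V z = h / r * (1 - exp (-α * z)) := fun z => by
    rw [hV, deriv_expAffine, hKα]
    ring
  have hV'_lt : ∀ z, deriv V z < c := fun z =>
    hV' z ▸ mul_one_sub_exp_lt (div_pos hh hr) ((div_le_iff₀' hr).2 hhc) _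
  refine ⟨by simp [hV'], fun z _ => ⟨hV' z, hV'_lt z⟩, fun b z _ _ => ?_⟩
  rw [max_eq_right (sub_nonpos.2 (hV'_lt z).le), mul_zero, sub_zero, hV]
  exact expAffine_solves_ode K α _ hα_sq (mul_div_cancel₀ h hr.ne') z

/-- One-dimensional discounted HJB with linear cost, case `h ≤ rc`: the function
`V(z) = (h√a/(√2 r^{3/2})) e^{−√(2r/a) z} + hz/r` satisfies `V′(0) = 0`,
`V′(z) = (h/r)(1 − e^{−√(2r/a) z}) < c` for all `z ≥ 0`, and solves
`(a/2)V″(z) + hz − b(V′(z) − c)⁺ = rV(z)` for every `b ≥ 0` and `z ≥ 0`. -/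
theorem stmt_12 (r h a c : ℝ) (hr : 0 < r) (hh : 0 < h) (ha : 0 < a) (hc : 0 < c)
    (hhc : h ≤ r * c) :
    let V : ℝ → ℝ := fun z =>
      (h * Real.sqrt a / (Real.sqrt 2 * (r * Real.sqrt r))) *
          Real.exp (-(Real.sqrt (2 * r / a)) * z) + h * z / r
    deriv V 0 = 0 ∧
      (∀ z, 0 ≤ z →
        deriv V z = (h / r) * (1 - Real.exp (-(Real.sqrt (2 * r / a)) * z)) ∧
          deriv V z < c) ∧
      (∀ b z, 0 ≤ b → 0 ≤ z →
        a / 2 * deriv (deriv V) z + h * z - b * max (deriv V z - c) 0 = r * V z) :=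
  stmt_12_general r h a c hr hh ha hhc
end
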